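/- arXiv:2511.21363 — 2 statements merged into one kernel-verified Lean document; each statement's English description precedes it below -/
import Mathlib

section
/- Under Sensitivity-N for all N at every point on the perturbation path, choosing at each step the remaining feature with the largest attribution at the current perturbed point yields the maximal (most negative, i.e., largest) prediction drop at that step among all possible choices of next feature. -/
/-- Under Sensitivity-N for all `N` at every point on the perturbation path
(points of the form `x` with a subset `T` replaced by the baseline `x'`), choosing at the
current point the remaining feature with the largest attribution yields the maximal score
drop at that step among all possible choices of next feature: the resulting score is minimal. -/
theorem stmt4 {d : ℕ} (s : (Fin d → ℝ) → ℝ) (x x' : Fin d → ℝ)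
    (A : (Fin d → ℝ) → Fin d → ℝ)
    (hsens : ∀ T S : Finset (Fin d),
      ∑ i ∈ S, A (fun i => if i ∈ T then x' i else x i) i
        = s (fun i => if i ∈ T then x' i else x i)
          - s (fun i => if i ∈ S ∪ T then x' i else x i))
    (T : Finset (Fin d)) (istar : Fin d) (histar : istar ∉ T)
    (hmax : ∀ i : Fin d, i ∉ T → A (fun j => if j ∈ T then x' j else x j) i
      ≤ A (fun j => if j ∈ T then x' j else x j) istar) :
    ∀ i : Fin d, i ∉ T →
      s (fun j => if j ∈ insert istar T then x' j else x j)
        ≤ s (fun j => if j ∈ insert i T then x' j else x j) := by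
  intro i hi
  have h1 := hsens T {i}
  have h2 := hsens T {istar}
  simp only [Finset.sum_singleton] at h1 h2
  rw [show ({i} ∪ T : Finset (Fin d)) = insert i T from rfl] at h1
  rw [show ({istar} ∪ T : Finset (Fin d)) = insert istar T from rfl] at h2
  have := hmax i hi
  linarith
end

section
/- Integrated Gradients satisfies completeness: for continuously differentiable s and the straight-line path from baseline x' to x, the sum of all Integrated Gradient attributions equals s(x) − s(x'). In particular IG satisfies Sensitivity-d (for the full feature set). -/
open MeasureTheory intervalIntegral

/-- Integrated Gradients satisfies completeness: for a continuously
differentiable scoring function `s` and the straight-line path from baseline `x'` to `x`,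
the sum of all Integrated Gradients attributions equals `s x - s x'`. -/
theorem stmt12 {d : ℕ} (s : (Fin d → ℝ) → ℝ) (hs : ContDiff ℝ 1 s)
    (x x' : Fin d → ℝ) :
    ∑ i : Fin d, (x i - x' i) *
        ∫ α in (0:ℝ)..1, fderiv ℝ s (x' + α • (x - x')) (Pi.single i 1)
      = s x - s x' := by
  set γ : ℝ → (Fin d → ℝ) := fun α => x' + α • (x - x') with hγ
  have hγderiv : ∀ α : ℝ, HasDerivAt γ (x - x') α := by
    intro α
    have h1 : HasDerivAt (fun α : ℝ => α • (x - x')) (x - x') α := by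
      simpa using (hasDerivAt_id α).smul_const (x - x')
    simpa [hγ] using h1.const_add x'
  have hcontf : Continuous (fun α : ℝ => fderiv ℝ s (γ α)) := by
    have : Continuous (fderiv ℝ s) := hs.continuous_fderiv one_ne_zero
    exact this.comp (by continuity)
  have hderiv : ∀ α ∈ Set.uIcc (0:ℝ) 1,
      HasDerivAt (fun α => s (γ α)) (fderiv ℝ s (γ α) (x - x')) α := by
    intro α _
    exact ((hs.differentiable one_ne_zero (γ α)).hasFDerivAt).comp_hasDerivAt α (hγderiv α)
  have hint : IntervalIntegrable (fun α => fderiv ℝ s (γ α) (x - x'))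
      MeasureTheory.volume 0 1 := by
    apply Continuous.intervalIntegrable
    exact (ContinuousLinearMap.apply ℝ ℝ (x - x')).continuous.comp hcontf
  have key : (∫ α in (0:ℝ)..1, fderiv ℝ s (γ α) (x - x')) = s x - s x' := by
    have := intervalIntegral.integral_eq_sub_of_hasDerivAt
      (f := fun α => s (γ α)) (f' := fun α => fderiv ℝ s (γ α) (x - x'))
      (fun α hα => hderiv α hα) hint
    simpa [hγ] using this
  rw [← key]
  have hinti : ∀ i : Fin d, IntervalIntegrable
      (fun α => fderiv ℝ s (γ α) (Pi.single i 1)) MeasureTheory.volume 0 1 := by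
    intro i
    apply Continuous.intervalIntegrable
    exact (ContinuousLinearMap.apply ℝ ℝ (Pi.single i 1)).continuous.comp hcontf
  calc ∑ i : Fin d, (x i - x' i) *
        ∫ α in (0:ℝ)..1, fderiv ℝ s (γ α) (Pi.single i 1)
      = ∑ i : Fin d, ∫ α in (0:ℝ)..1,
          (x i - x' i) * fderiv ℝ s (γ α) (Pi.single i 1) := by
        simp [intervalIntegral.integral_const_mul]
    _ = ∫ α in (0:ℝ)..1, ∑ i : Fin d,
          (x i - x' i) * fderiv ℝ s (γ α) (Pi.single i 1) := by
        exact (intervalIntegral.integral_finset_sum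
          (fun i _ => (hinti i).const_mul _)).symm
    _ = ∫ α in (0:ℝ)..1, fderiv ℝ s (γ α) (x - x') := by
        congr 1
        funext α
        have : (x - x') = ∑ i : Fin d, (x i - x' i) • (Pi.single i 1 : Fin d → ℝ) := by
          funext j
          simp [Finset.sum_apply, Pi.single_apply, Finset.sum_ite_eq']
        conv_rhs => rw [this]
        rw [map_sum]
        simp [smul_eq_mul]
end
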